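/- arXiv:1309.6242 — 3 statements merged into one kernel-verified Lean document; each statement's English description precedes it below -/
import Mathlib

section
/- Let S = {S_i}_{i∈E} be a strongly separated similarity IFS on ℝ^d with attractor C. Then for every nonempty finite word v ∈ E^* one has dist(C_v, C∖C_v) ≥ diam(C_v). -/
open MeasureTheory Metric Set Filter
open scoped ENNReal Topology NNReal

noncomputable section

/-- Euclidean space `ℝ^d`. -/
abbrev Euc (d : ℕ) := EuclideanSpace ℝ (Fin d)

/-- Composition `S_w = S_{w_1} ∘ ⋯ ∘ S_{w_n}` along a finite word. -/
def Sw {d N : ℕ} (S : Fin N → Euc d → Euc d) : List (Fin N) → Euc d → Euc d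
  | [] => id
  | i :: t => S i ∘ Sw S t

/-- The finite word `w|_k = w_1 ⋯ w_k` of an infinite word. -/
def word {N : ℕ} (w : ℕ → Fin N) (k : ℕ) : List (Fin N) :=
  List.ofFn (fun j : Fin k => w j)

/-- Distance between two sets. -/
def setDist {X : Type*} [PseudoMetricSpace X] (A B : Set X) : ℝ :=
  sInf (Set.image2 dist A B)

/-- The word `w` repeated `m` times. -/
def wrep {N : ℕ} (w : List (Fin N)) (m : ℕ) : List (Fin N) :=
  (List.replicate m w).flatten

/-- The unit vector `(x - ξ)/|x - ξ|`, as a point of the unit sphere. -/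
def sphN {d : ℕ} (ξ x : Euc d) (h : x ≠ ξ) : sphere (0 : Euc d) 1 :=
  ⟨‖x - ξ‖⁻¹ • (x - ξ), by
    have hx : x - ξ ≠ 0 := sub_ne_zero.mpr h
    simp [mem_sphere_iff_norm, norm_smul, abs_of_nonneg,
      inv_mul_cancel₀ (norm_ne_zero_iff.mpr hx)]⟩

/-- The starred integral: the integral if the integrand is integrable on the set, else `0`. -/
def starInt {X : Type*} [MeasurableSpace X] (μ : Measure X) (A : Set X) (g : X → ℝ) : ℝ :=
  @ite _ (IntegrableOn g A μ) (Classical.dec _) (∫ y in A, g y ∂μ) 0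

/-- For a strongly separated similarity IFS on `ℝ^d` with attractor `C`,
for every nonempty finite word `v` one has `dist(C_v, C∖C_v) ≥ diam(C_v)`. -/
theorem stmt10
    {d N : ℕ} (hd : 1 ≤ d) (hN : 2 ≤ N)
    (r : Fin N → ℝ) (hr : ∀ i, r i ∈ Set.Ioo (0:ℝ) 1)
    (S : Fin N → Euc d → Euc d)
    (hSsim : ∀ i x y, dist (S i x) (S i y) = r i * dist x y)
    (C : Set (Euc d)) (hCne : C.Nonempty) (hCcomp : IsCompact C)
    (hCinv : C = ⋃ i, S i '' C)
    (hssep : ∀ i j, diam (S j '' C) ≤ setDist (S i '' C) (C \ S i '' C))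
    (hsPos : ∀ i, 0 < setDist (S i '' C) (C \ S i '' C)) :
    ∀ v : List (Fin N), v ≠ [] →
      diam (Sw S v '' C) ≤ setDist (Sw S v '' C) (C \ Sw S v '' C) := by
  -- basic facts
  have hbddC : Bornology.IsBounded C := hCcomp.isBounded
  have hsub : ∀ v : List (Fin N), Sw S v '' C ⊆ C := by
    intro v
    induction v with
    | nil => simp [Sw]
    | cons i t ih =>
      intro x hx
      rcases hx with ⟨y, hy, rfl⟩
      have : S i (Sw S t y) ∈ S i '' C := ⟨Sw S t y, ih ⟨y, hy, rfl⟩, rfl⟩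
      rw [hCinv]; exact Set.mem_iUnion.2 ⟨i, this⟩
  have hbdd : ∀ v : List (Fin N), Bornology.IsBounded (Sw S v '' C) :=
    fun v => hbddC.subset (hsub v)
  have hSsub : ∀ i, S i '' C ⊆ C := by
    intro i x hx; rw [hCinv]; exact Set.mem_iUnion.2 ⟨i, hx⟩
  have hbddS : ∀ i, Bornology.IsBounded (S i '' C) := fun i => hbddC.subset (hSsub i)
  -- setDist is at most any pairwise distance
  have hsd_le : ∀ (A B : Set (Euc d)) (x y : Euc d), x ∈ A → y ∈ B →
      setDist A B ≤ dist x y := by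
    intro A B x y hx hy
    apply csInf_le
    · exact ⟨0, fun z hz => by
        rcases hz with ⟨a, ha, b, hb, rfl⟩; exact dist_nonneg⟩
    · exact ⟨x, hx, y, hy, rfl⟩
  -- C \ S i '' C is nonempty
  have hdiff_ne : ∀ i, (C \ S i '' C).Nonempty := by
    intro i
    by_contra h
    rw [Set.not_nonempty_iff_eq_empty] at h
    have := hsPos i
    rw [setDist, h, Set.image2_empty_right, Real.sInf_empty] at this
    exact lt_irrefl 0 this
  -- diam of image under S i
  have hdiam_image : ∀ i (A : Set (Euc d)), Bornology.IsBounded A →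
      diam (S i '' A) ≤ r i * diam A := by
    intro i A hA
    apply diam_le_of_forall_dist_le
    · exact mul_nonneg (le_of_lt (hr i).1) diam_nonneg
    · rintro x ⟨x', hx', rfl⟩ y ⟨y', hy', rfl⟩
      rw [hSsim]
      exact mul_le_mul_of_nonneg_left (dist_le_diam_of_mem hA hx' hy')
        (le_of_lt (hr i).1)
  -- main induction
  intro v hv
  induction v with
  | nil => exact absurd rfl hv
  | cons i t ih =>
    by_cases ht : t = []
    · subst ht
      have h1 : Sw S [i] '' C = S i '' C := by
        simp [Sw, Set.image_comp]
      rw [h1]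
      exact hssep i i
    · -- inductive step
      have IH := ih ht
      set A := Sw S t '' C with hA
      have hAC : A ⊆ C := hsub t
      have hSw : Sw S (i :: t) '' C = S i '' A := by
        rw [hA, ← Set.image_comp]; rfl
      rw [hSw]
      have hAne : A.Nonempty := hCne.image _
      have hSiA_sub : S i '' A ⊆ S i '' C := Set.image_mono hAC
      have hdiff_sub : C \ S i '' C ⊆ C \ S i '' A :=
        fun y hy => ⟨hy.1, fun h => hy.2 (hSiA_sub h)⟩
      have hne2 : (C \ S i '' A).Nonempty := (hdiff_ne i).mono hdiff_sub
      apply le_csInf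
      · obtain ⟨a, ha⟩ := hAne.image (S i)
        obtain ⟨b, hb⟩ := hne2
        exact ⟨dist a b, ⟨a, ha, b, hb, rfl⟩⟩
      · rintro z ⟨x, hx, y, hy, rfl⟩
        by_cases hyS : y ∈ S i '' C
        · -- y = S i y', y' ∈ C \ A
          rcases hyS with ⟨y', hy'C, rfl⟩
          rcases hx with ⟨x', hx'A, rfl⟩
          have hy'A : y' ∉ A := fun h => hy.2 ⟨y', h, rfl⟩
          have h1 : diam (S i '' A) ≤ r i * diam A :=
            hdiam_image i A (hbddC.subset hAC)
          have h2 : diam A ≤ dist x' y' :=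
            le_trans IH (hsd_le A (C \ A) x' y' hx'A ⟨hy'C, hy'A⟩)
          calc diam (S i '' A) ≤ r i * diam A := h1
            _ ≤ r i * dist x' y' :=
              mul_le_mul_of_nonneg_left h2 (le_of_lt (hr i).1)
            _ = dist (S i x') (S i y') := (hSsim i x' y').symm
        · -- y ∈ C \ S i '' C
          have hyD : y ∈ C \ S i '' C := ⟨hy.1, hyS⟩
          have hxS : x ∈ S i '' C := hSiA_sub hx
          calc diam (S i '' A) ≤ diam (S i '' C) :=
              diam_mono hSiA_sub (hbddS i)
            _ ≤ setDist (S i '' C) (C \ S i '' C) := hssep i i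
            _ ≤ dist x y := hsd_le _ _ x y hxS hyD
end
end

section
/- Let S = {S_i}_{i∈E} be a separated similarity IFS on ℝ^d with attractor C of similarity dimension s and μ = H^s(C)^{-1}·H^s⌊C, and let Ω : ℝ^d∖{0} → ℝ be real analytic and homogeneous of degree zero. Set C_1 := S_1(C). Then the function f(x) := ∫_{C∖C_1} Ω(x−y)/|x−y|^s dμ(y) is well defined and real analytic on the open set ℝ^d ∖ (C∖C_1). -/
open MeasureTheory Metric Set Filter
open scoped ENNReal Topology NNReal

set_option maxHeartbeats 1000000
set_option synthInstance.maxHeartbeats 1000000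

noncomputable section

lemma g_analytic {d : ℕ} (s : ℝ) {Ω : Euc d → ℝ} (hΩan : AnalyticOnNhd ℝ Ω {x | x ≠ 0})
    {x y : Euc d} (hxy : x ≠ y) :
    AnalyticAt ℝ (fun p : Euc d × Euc d => Ω (p.1 - p.2) / ‖p.1 - p.2‖ ^ s) (x, y) := by
  have hu : AnalyticAt ℝ (fun p : Euc d × Euc d => p.1 - p.2) (x, y) :=
    analyticAt_fst.sub analyticAt_snd
  have hv : x - y ≠ 0 := sub_ne_zero.mpr hxy
  have hnum : AnalyticAt ℝ (fun p : Euc d × Euc d => Ω (p.1 - p.2)) (x, y) :=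
    AnalyticAt.comp (f := fun p : Euc d × Euc d => p.1 - p.2) (hΩan _ hv) hu
  have hinner : AnalyticAt ℝ
      (fun p : Euc d × Euc d => (inner ℝ (p.1 - p.2) (p.1 - p.2) : ℝ)) (x, y) := by
    have hb := (innerSL ℝ (E := Euc d)).analyticAt_bilinear (x - y, x - y)
    exact AnalyticAt.comp (f := fun p : Euc d × Euc d => (p.1 - p.2, p.1 - p.2)) hb (hu.prod hu)
  have hpos : (0 : ℝ) < (inner ℝ (x - y) (x - y) : ℝ) := by
    rw [real_inner_self_eq_norm_sq]
    exact pow_pos (norm_pos_iff.mpr hv) 2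
  have hlog : AnalyticAt ℝ (fun t : ℝ => (Complex.log (t : ℂ)).re)
      ((inner ℝ (x - y) (x - y) : ℝ)) := by
    have h1 : AnalyticAt ℝ (fun t : ℝ => (t : ℂ)) ((inner ℝ (x - y) (x - y) : ℝ)) :=
      Complex.ofRealCLM.analyticAt _
    have h2 : AnalyticAt ℝ Complex.log ((((inner ℝ (x - y) (x - y) : ℝ)) : ℂ)) :=
      (analyticAt_clog (Complex.ofReal_mem_slitPlane.mpr hpos)).restrictScalars
    have h3 : AnalyticAt ℝ (fun z : ℂ => z.re)
        (Complex.log (((inner ℝ (x - y) (x - y) : ℝ)) : ℂ)) :=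
      Complex.reCLM.analyticAt _
    exact AnalyticAt.comp (f := fun t : ℝ => (t : ℂ)) (h3.comp h2) h1
  have hden : AnalyticAt ℝ
      (fun p : Euc d × Euc d =>
        Real.exp ((s / 2) * (Complex.log ((inner ℝ (p.1 - p.2) (p.1 - p.2) : ℝ) : ℂ)).re))
      (x, y) := by
    refine AnalyticAt.rexp ?_
    exact analyticAt_const.mul
      (AnalyticAt.comp (g := fun t : ℝ => (Complex.log (t : ℂ)).re) (f := fun p : Euc d × Euc d => (inner ℝ (p.1 - p.2) (p.1 - p.2) : ℝ))
        hlog hinner)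
  have hwhole := hnum.div hden (Real.exp_ne_zero _)
  apply hwhole.congr
  have hopen : IsOpen {p : Euc d × Euc d | p.1 ≠ p.2} :=
    isOpen_ne_fun continuous_fst continuous_snd
  filter_upwards [hopen.mem_nhds (by exact hxy : (x, y) ∈ {p : Euc d × Euc d | p.1 ≠ p.2})]
    with p hp
  have hv' : p.1 - p.2 ≠ 0 := sub_ne_zero.mpr hp
  have hn : (0:ℝ) < ‖p.1 - p.2‖ := norm_pos_iff.mpr hv'
  simp only [Pi.div_apply]
  congr 1
  rw [Complex.log_ofReal_re, real_inner_self_eq_norm_sq, Real.rpow_def_of_pos hn]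
  rw [Real.log_pow]
  push_cast
  ring_nf

lemma local_data {d : ℕ} {g : Euc d × Euc d → ℝ} {x₀ y₀ : Euc d}
    (hg : AnalyticAt ℝ g (x₀, y₀)) :
    ∃ (t : ℝ≥0) (C : ℝ) (Q : Euc d → FormalMultilinearSeries ℝ (Euc d) ℝ), 0 < t ∧
      (∀ y ∈ Metric.ball y₀ (t : ℝ),
        HasFPowerSeriesOnBall (fun x => g (x, y)) (Q y) x₀ t) ∧
      (∀ y ∈ Metric.ball y₀ (t : ℝ), ∀ n, ‖Q y n‖ * (t : ℝ) ^ n ≤ C) ∧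
      (∀ n, ContinuousOn (fun y => Q y n) (Metric.ball y₀ (t : ℝ))) := by
  obtain ⟨p, hp⟩ := hg
  obtain ⟨R, hpR⟩ := hp
  have hR0 : 0 < R := hpR.r_pos
  obtain ⟨u, hu0, huR⟩ : ∃ u : ℝ≥0, 0 < u ∧ (u : ℝ≥0∞) < R := by
    rcases ENNReal.lt_iff_exists_nnreal_btwn.mp hR0 with ⟨u, hu1, hu2⟩
    exact ⟨u, by exact_mod_cast hu1, hu2⟩
  set t : ℝ≥0 := u / 2 with ht_def
  have ht0 : 0 < t := by positivity
  have htt : ((t : ℝ≥0∞) + t) < R := by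
    have : (t + t : ℝ≥0) = u := by rw [ht_def]; exact add_halves u
    rw [← ENNReal.coe_add, this]; exact huR
  have htR : (t : ℝ≥0∞) < R := lt_of_le_of_lt (le_self_add) htt
  have htrad : (t : ℝ≥0∞) < p.radius := htR.trans_le hpR.r_le
  -- summability of the double sum
  have haux := p.changeOriginSeries_summable_aux₁ (r := t) (r' := t) (htt.trans_le hpR.r_le)
  obtain ⟨hinner, houter⟩ := NNReal.summable_sigma.mp haux
  set A : ℝ≥0 := ∑' k : ℕ,
    ∑' σ : Σ l : ℕ, { s : Finset (Fin (k + l)) // s.card = l },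
      ‖p (k + σ.1)‖₊ * t ^ σ.1 * t ^ k with hA_def
  -- the norm bound for changeOrigin coefficients
  have hco : ∀ w : Euc d × Euc d, ‖w‖₊ ≤ t → ∀ n,
      ‖p.changeOrigin w n‖₊ * t ^ n ≤ A := by
    intro w hw n
    have h1 : ‖p.changeOrigin w n‖₊ ≤
        ∑' σ : Σ l : ℕ, { s : Finset (Fin (n + l)) // s.card = l },
          ‖p (n + σ.1)‖₊ * ‖w‖₊ ^ σ.1 :=
      p.nnnorm_changeOrigin_le n (lt_of_le_of_lt (by exact_mod_cast hw) htrad)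
    have h2 : ∑' σ : Σ l : ℕ, { s : Finset (Fin (n + l)) // s.card = l },
          ‖p (n + σ.1)‖₊ * ‖w‖₊ ^ σ.1 ≤
        ∑' σ : Σ l : ℕ, { s : Finset (Fin (n + l)) // s.card = l },
          ‖p (n + σ.1)‖₊ * t ^ σ.1 := by
      refine Summable.tsum_le_tsum (fun σ => ?_) ?_ ?_
      · exact mul_le_mul_right (pow_le_pow_left' hw _) _
      · exact NNReal.summable_of_le (fun σ => mul_le_mul_right (pow_le_pow_left' hw _) _)
          (p.changeOriginSeries_summable_aux₂ htrad n)
      · exact p.changeOriginSeries_summable_aux₂ htrad n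
    have h3 : (∑' σ : Σ l : ℕ, { s : Finset (Fin (n + l)) // s.card = l },
          ‖p (n + σ.1)‖₊ * t ^ σ.1) * t ^ n ≤ A := by
      have : (∑' σ : Σ l : ℕ, { s : Finset (Fin (n + l)) // s.card = l },
          ‖p (n + σ.1)‖₊ * t ^ σ.1) * t ^ n =
          ∑' σ : Σ l : ℕ, { s : Finset (Fin (n + l)) // s.card = l },
            ‖p (n + σ.1)‖₊ * t ^ σ.1 * t ^ n := (NNReal.tsum_mul_right _ _).symm
      rw [this, hA_def]
      exact Summable.le_tsum' houter n
    calc ‖p.changeOrigin w n‖₊ * t ^ n ≤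
        (∑' σ : Σ l : ℕ, { s : Finset (Fin (n + l)) // s.card = l },
          ‖p (n + σ.1)‖₊ * t ^ σ.1) * t ^ n := mul_le_mul_left (h1.trans h2) _
      _ ≤ A := h3
  -- the linear inclusion
  set L : Euc d →L[ℝ] Euc d × Euc d := ContinuousLinearMap.inl ℝ (Euc d) (Euc d) with hL
  have hLnorm : ∀ z : Euc d, ‖L z‖ = ‖z‖ := by
    intro z; simp [hL, Prod.norm_def]
  set Q : Euc d → FormalMultilinearSeries ℝ (Euc d) ℝ := fun y =>
    (p.changeOrigin ((0 : Euc d), y - y₀)).compContinuousLinearMap L with hQ_def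
  have hQnorm : ∀ y n, ‖Q y n‖ ≤ ‖p.changeOrigin ((0 : Euc d), y - y₀) n‖ := by
    intro y n
    refine le_trans (ContinuousMultilinearMap.norm_compContinuousLinearMap_le _ _) ?_
    have hL1 : ‖L‖ ≤ 1 := by
      refine ContinuousLinearMap.opNorm_le_bound _ zero_le_one (fun z => ?_)
      rw [hLnorm z, one_mul]
    calc ‖p.changeOrigin ((0 : Euc d), y - y₀) n‖ * ∏ _i : Fin n, ‖L‖
        ≤ ‖p.changeOrigin ((0 : Euc d), y - y₀) n‖ * ∏ _i : Fin n, 1 := by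
          gcongr
      _ = ‖p.changeOrigin ((0 : Euc d), y - y₀) n‖ := by simp
  have hwnorm : ∀ y ∈ Metric.ball y₀ (t : ℝ), ‖((0 : Euc d), y - y₀)‖₊ < t := by
    intro y hy
    rw [mem_ball, dist_eq_norm] at hy
    have : ‖((0 : Euc d), y - y₀)‖ = ‖y - y₀‖ := by
      simp [Prod.norm_def]
    rw [← NNReal.coe_lt_coe, coe_nnnorm, this]
    exact hy
  refine ⟨t, A, Q, ht0, ?_, ?_, ?_⟩
  · -- power series on ball
    intro y hy
    have hw := hwnorm y hy
    have hwe : (‖((0 : Euc d), y - y₀)‖₊ : ℝ≥0∞) < R := (by exact_mod_cast hw : (‖_‖₊:ℝ≥0∞) < t).trans htR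
    have hco' := hpR.changeOrigin hwe
    have hpt : ((x₀, y₀) : Euc d × Euc d) + ((0 : Euc d), y - y₀) = (x₀, y) := by
      ext <;> simp
    rw [hpt] at hco'
    have hrad : (t : ℝ≥0∞) ≤ R - ‖((0 : Euc d), y - y₀)‖₊ := by
      have h1 : (t : ℝ≥0∞) ≤ R - t := ENNReal.le_sub_of_add_le_left (by simp) htt.le
      exact h1.trans (tsub_le_tsub_left (by exact_mod_cast hw.le) R)
    have hco'' : HasFPowerSeriesOnBall g (p.changeOrigin ((0 : Euc d), y - y₀)) (x₀, y) t :=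
      hco'.mono (by exact_mod_cast ht0) hrad
    constructor
    · -- radius bound
      refine FormalMultilinearSeries.le_radius_of_bound _ (A : ℝ) (fun n => ?_)
      calc ‖Q y n‖ * (t : ℝ) ^ n ≤ ‖p.changeOrigin ((0 : Euc d), y - y₀) n‖ * (t : ℝ) ^ n := by
            gcongr; exact hQnorm y n
        _ ≤ (A : ℝ) := by exact_mod_cast hco ((0 : Euc d), y - y₀) hw.le n
    · exact_mod_cast ht0
    · intro z hz
      have hz' : (L z) ∈ Metric.eball (0 : Euc d × Euc d) (t : ℝ≥0∞) := by
        have hnn : ‖L z‖₊ = ‖z‖₊ := NNReal.coe_injective (by simp [coe_nnnorm, hLnorm z])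
        rw [Metric.mem_eball, edist_zero_right, enorm_eq_nnnorm, hnn]
        rwa [Metric.mem_eball, edist_zero_right, enorm_eq_nnnorm] at hz
      have hs := hco''.hasSum hz'
      have heq : ((x₀, y) : Euc d × Euc d) + L z = (x₀ + z, y) := by
        ext <;> simp [hL]
      rw [heq] at hs
      convert hs using 2
      exact rfl
  · -- coefficient bounds
    intro y hy n
    calc ‖Q y n‖ * (t : ℝ) ^ n ≤ ‖p.changeOrigin ((0 : Euc d), y - y₀) n‖ * (t : ℝ) ^ n := by
          gcongr; exact hQnorm y n
      _ ≤ (A : ℝ) := by exact_mod_cast hco ((0 : Euc d), y - y₀) (hwnorm y hy).le n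
  · -- continuity
    intro n
    have hrp : 0 < p.radius := hR0.trans_le hpR.r_le
    have hcont := (p.hasFPowerSeriesOnBall_changeOrigin n hrp).continuousOn
    have hmap : ∀ y ∈ Metric.ball y₀ (t : ℝ),
        ((0 : Euc d), y - y₀) ∈ Metric.eball (0 : Euc d × Euc d) p.radius := by
      intro y hy
      rw [Metric.mem_eball, edist_zero_right, enorm_eq_nnnorm]
      exact lt_of_lt_of_le (lt_of_lt_of_le (by exact_mod_cast hwnorm y hy) htR.le) hpR.r_le
    have hys : Continuous (fun y : Euc d => (((0 : Euc d), y - y₀) : Euc d × Euc d)) := by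
      fun_prop
    have hcomp : ContinuousOn (fun y : Euc d => p.changeOrigin ((0 : Euc d), y - y₀) n)
        (Metric.ball y₀ (t : ℝ)) :=
      hcont.comp hys.continuousOn hmap
    have hclm := (ContinuousMultilinearMap.compContinuousLinearMapL (F := ℝ)
      (fun _ : Fin n => L)).continuous
    exact hclm.comp_continuousOn hcomp

lemma piece {d : ℕ} (μ : Measure (Euc d)) [IsFiniteMeasure μ] {A : Set (Euc d)}
    (hA : MeasurableSet A) {g : Euc d × Euc d → ℝ} {x₀ : Euc d}
    {t : ℝ≥0} (ht : 0 < t) {C : ℝ} {Q : Euc d → FormalMultilinearSeries ℝ (Euc d) ℝ}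
    (hQ : ∀ y ∈ A, HasFPowerSeriesOnBall (fun x => g (x, y)) (Q y) x₀ t)
    (hC : ∀ y ∈ A, ∀ n, ‖Q y n‖ * (t : ℝ) ^ n ≤ C)
    (hm : ∀ n, AEStronglyMeasurable (fun y => Q y n) (μ.restrict A)) :
    (∀ x ∈ Metric.ball x₀ (t : ℝ), IntegrableOn (fun y => g (x, y)) A μ) ∧
    AnalyticAt ℝ (fun x => ∫ y in A, g (x, y) ∂μ) x₀ := by
  set D : ℝ := max C 0 with hD_def
  have hD0 : 0 ≤ D := le_max_right _ _
  have hCD : ∀ y ∈ A, ∀ n, ‖Q y n‖ ≤ D / (t : ℝ) ^ n := by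
    intro y hy n
    rw [le_div_iff₀ (by positivity)]
    exact (hC y hy n).trans (le_max_left _ _)
  have hQint : ∀ n, Integrable (fun y => Q y n) (μ.restrict A) := by
    intro n
    refine Integrable.mono' (integrable_const (D / (t : ℝ) ^ n)) (hm n) ?_
    rw [ae_restrict_iff' hA]
    exact Filter.Eventually.of_forall (fun y hy => hCD y hy n)
  have hptbound : ∀ z : Euc d, ∀ y ∈ A, ∀ n, ‖Q y n fun _ => z‖ ≤ D * (‖z‖ / t) ^ n := by
    intro z y hy n
    calc ‖Q y n fun _ => z‖ ≤ ‖Q y n‖ * ∏ _i : Fin n, ‖z‖ :=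
          ContinuousMultilinearMap.le_opNorm _ _
      _ = ‖Q y n‖ * ‖z‖ ^ n := by simp
      _ ≤ (D / (t : ℝ) ^ n) * ‖z‖ ^ n := by
          gcongr
          exact hCD y hy n
      _ = D * (‖z‖ / t) ^ n := by
          rw [div_pow]; ring
  set F : FormalMultilinearSeries ℝ (Euc d) ℝ := fun n => ∫ y in A, Q y n ∂μ with hF_def
  have hmain : ∀ z : Euc d, ‖z‖ < (t : ℝ) →
      (IntegrableOn (fun y => g (x₀ + z, y)) A μ ∧
        HasSum (fun n => F n fun _ => z) (∫ y in A, g (x₀ + z, y) ∂μ)) := by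
    intro z hz
    have hq : ‖z‖ / (t : ℝ) < 1 := by
      rw [div_lt_one (by exact_mod_cast ht)]
      exact hz
    have hq0 : 0 ≤ ‖z‖ / (t : ℝ) := by positivity
    have hzball : z ∈ Metric.eball (0 : Euc d) (t : ℝ≥0∞) := by
      rw [Metric.mem_eball, edist_zero_right, enorm_eq_nnnorm]
      exact_mod_cast hz
    set φ : ℕ → Euc d → ℝ := fun n y => Q y n fun _ => z with hφ_def
    have hφm : ∀ n, AEStronglyMeasurable (φ n) (μ.restrict A) := by
      intro n
      exact (ContinuousMultilinearMap.apply ℝ (fun _ : Fin n => Euc d) ℝ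
        (fun _ => z)).continuous.comp_aestronglyMeasurable (hm n)
    have hφint : ∀ n, Integrable (φ n) (μ.restrict A) := by
      intro n
      refine Integrable.mono' (integrable_const (D * (‖z‖ / t) ^ n)) (hφm n) ?_
      rw [ae_restrict_iff' hA]
      exact Filter.Eventually.of_forall (fun y hy => hptbound z y hy n)
    have hφsum : ∀ y ∈ A, HasSum (fun n => φ n y) (g (x₀ + z, y)) := fun y hy =>
      (hQ y hy).hasSum hzball
    have hnormint : ∀ n, ∫ y in A, ‖φ n y‖ ∂μ ≤ D * (‖z‖ / t) ^ n * (μ A).toReal := by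
      intro n
      have h1 : ∫ y in A, ‖φ n y‖ ∂μ ≤ ∫ _y in A, D * (‖z‖ / t) ^ n ∂μ := by
        refine integral_mono_ae (hφint n).norm (integrable_const _) ?_
        have h2 := (ae_restrict_iff' (μ := μ) hA).mpr
          (Filter.Eventually.of_forall (fun y (hy : y ∈ A) => hptbound z y hy n))
        exact h2
      rw [integral_const] at h1
      refine h1.trans ?_
      rw [measureReal_restrict_apply_univ, smul_eq_mul, mul_comm, Measure.real]
    have hsummable : Summable fun n => ∫ y in A, ‖φ n y‖ ∂μ := by
      refine Summable.of_nonneg_of_le (fun n => integral_nonneg (fun y => norm_nonneg _))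
        (fun n => hnormint n) ?_
      exact (((summable_geometric_of_lt_one hq0 hq).mul_left D).mul_right _)
    have hHasSum := hasSum_integral_of_summable_integral_norm (F := φ)
      (μ := μ.restrict A) hφint hsummable
    have htsum_eq : ∀ᵐ y ∂(μ.restrict A), (∑' n, φ n y) = g (x₀ + z, y) := by
      rw [ae_restrict_iff' hA]
      exact Filter.Eventually.of_forall (fun y hy => (hφsum y hy).tsum_eq)
    have hgm : AEStronglyMeasurable (fun y => g (x₀ + z, y)) (μ.restrict A) := by
      refine aestronglyMeasurable_of_tendsto_ae atTop
        (f := fun m : ℕ => fun y => ∑ n ∈ Finset.range m, φ n y) (fun m => ?_) ?_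
      · apply Finset.aestronglyMeasurable_fun_sum
        intro n _
        exact hφm n
      · rw [ae_restrict_iff' hA]
        exact Filter.Eventually.of_forall (fun y hy => (hφsum y hy).tendsto_sum_nat)
    have hgbound : ∀ y ∈ A, ‖g (x₀ + z, y)‖ ≤ D * (1 - ‖z‖ / t)⁻¹ := by
      intro y hy
      have hsum_norm : Summable fun n => ‖φ n y‖ :=
        Summable.of_nonneg_of_le (fun n => norm_nonneg _) (fun n => hptbound z y hy n)
          ((summable_geometric_of_lt_one hq0 hq).mul_left D)
      calc ‖g (x₀ + z, y)‖ = ‖∑' n, φ n y‖ := by rw [(hφsum y hy).tsum_eq]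
        _ ≤ ∑' n, ‖φ n y‖ := norm_tsum_le_tsum_norm hsum_norm
        _ ≤ ∑' n, D * (‖z‖ / t) ^ n := by
            refine Summable.tsum_le_tsum (fun n => hptbound z y hy n) hsum_norm ?_
            exact (summable_geometric_of_lt_one hq0 hq).mul_left D
        _ = D * (1 - ‖z‖ / t)⁻¹ := by
            rw [tsum_mul_left, tsum_geometric_of_lt_one hq0 hq]
    have hgint : IntegrableOn (fun y => g (x₀ + z, y)) A μ := by
      refine Integrable.mono' (integrable_const (D * (1 - ‖z‖ / t)⁻¹)) hgm ?_
      rw [ae_restrict_iff' hA]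
      exact Filter.Eventually.of_forall hgbound
    refine ⟨hgint, ?_⟩
    have heval : ∀ n, F n (fun _ => z) = ∫ y in A, φ n y ∂μ := by
      intro n
      have := (ContinuousMultilinearMap.apply ℝ (fun _ : Fin n => Euc d) ℝ
        (fun _ => z)).integral_comp_comm (hQint n)
      exact this.symm
    have hIeq : (∫ y in A, (∑' n, φ n y) ∂μ) = ∫ y in A, g (x₀ + z, y) ∂μ :=
      integral_congr_ae htsum_eq
    have hfe : (fun n => F n fun _ => z) = fun n => ∫ y in A, φ n y ∂μ := funext heval
    rw [hfe, ← hIeq]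
    exact hHasSum
  have hF_radius_bound : ∀ n, ‖F n‖ * (t : ℝ) ^ n ≤ D * (μ A).toReal := by
    intro n
    have h1 : ‖F n‖ ≤ D / (t : ℝ) ^ n * (μ.restrict A Set.univ).toReal := by
      refine norm_integral_le_of_norm_le_const ?_
      exact (ae_restrict_iff' (μ := μ) hA).mpr
        (Filter.Eventually.of_forall (fun y (hy : y ∈ A) => hCD y hy n))
    rw [Measure.restrict_apply_univ] at h1
    calc ‖F n‖ * (t : ℝ) ^ n ≤ (D / (t : ℝ) ^ n * (μ A).toReal) * (t : ℝ) ^ n := by gcongr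
      _ = D * (μ A).toReal := by
          have htn : ((t : ℝ)) ^ n ≠ 0 := by positivity
          field_simp
  have hFP : HasFPowerSeriesOnBall (fun x => ∫ y in A, g (x, y) ∂μ) F x₀ t := by
    constructor
    · exact FormalMultilinearSeries.le_radius_of_bound _ _ (fun n => hF_radius_bound n)
    · exact_mod_cast ht
    · intro z hz
      have hz' : ‖z‖ < (t : ℝ) := by
        rw [Metric.mem_eball, edist_zero_right, enorm_eq_nnnorm] at hz
        exact_mod_cast hz
      exact (hmain z hz').2
  constructor
  · intro x hx
    rw [mem_ball, dist_eq_norm] at hx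
    have h2 := (hmain (x - x₀) hx).1
    have h3 : x₀ + (x - x₀) = x := by abel
    rwa [h3] at h2
  · exact hFP.analyticAt

lemma analyticAt_setIntegral {d : ℕ} (μ : Measure (Euc d)) [IsFiniteMeasure μ]
    {K : Set (Euc d)} (hK : IsCompact K) {g : Euc d × Euc d → ℝ} {x₀ : Euc d}
    (hg : ∀ y ∈ K, AnalyticAt ℝ g (x₀, y)) :
    AnalyticAt ℝ (fun x => ∫ y in K, g (x, y) ∂μ) x₀ := by
  have hloc : ∀ y₀ : K, ∃ (t : ℝ≥0) (C : ℝ)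
      (Q : Euc d → FormalMultilinearSeries ℝ (Euc d) ℝ), 0 < t ∧
      (∀ y ∈ Metric.ball (y₀ : Euc d) (t : ℝ),
        HasFPowerSeriesOnBall (fun x => g (x, y)) (Q y) x₀ t) ∧
      (∀ y ∈ Metric.ball (y₀ : Euc d) (t : ℝ), ∀ n, ‖Q y n‖ * (t : ℝ) ^ n ≤ C) ∧
      (∀ n, ContinuousOn (fun y => Q y n) (Metric.ball (y₀ : Euc d) (t : ℝ))) :=
    fun y₀ => local_data (hg y₀ y₀.2)
  choose t C Q ht hQ hC hQc using hloc
  obtain ⟨J, hJ⟩ := hK.elim_finite_subcover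
    (fun y₀ : K => Metric.ball (y₀ : Euc d) (t y₀ : ℝ)) (fun _ => isOpen_ball) (by
      intro y hy
      exact mem_iUnion.mpr ⟨⟨y, hy⟩, mem_ball_self (by exact_mod_cast ht ⟨y, hy⟩)⟩)
  classical
  set m : ℕ := J.card with hm_def
  set e : Fin m → K := fun i => (J.equivFin.symm i : K) with he_def
  set B : ℕ → Set (Euc d) := fun n =>
    ⋃ (h : n < m), Metric.ball ((e ⟨n, h⟩ : K) : Euc d) (t (e ⟨n, h⟩) : ℝ) with hB_def
  have hBmeas : ∀ n, MeasurableSet (B n) :=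
    fun n => MeasurableSet.iUnion (fun _ => measurableSet_ball)
  have hBempty : ∀ n, m ≤ n → B n = ∅ := by
    intro n hn
    rw [hB_def]
    exact iUnion_eq_empty.mpr (fun h => False.elim (not_lt.mpr hn h))
  have hKcover : K ⊆ ⋃ n, B n := by
    intro y hy
    obtain ⟨i, hiJ, hyi⟩ := mem_iUnion₂.mp (hJ hy)
    have h1 : ((J.equivFin ⟨i, hiJ⟩ : Fin m) : ℕ) < m := (J.equivFin ⟨i, hiJ⟩).2
    refine mem_iUnion.mpr ⟨(J.equivFin ⟨i, hiJ⟩ : Fin m), mem_iUnion.mpr ⟨h1, ?_⟩⟩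
    have h2 : e ⟨(J.equivFin ⟨i, hiJ⟩ : Fin m), h1⟩ = i := by
      rw [he_def]
      simp only [Fin.eta]
      rw [Equiv.symm_apply_apply]
    rw [h2]
    exact hyi
  set A : ℕ → Set (Euc d) := fun n => K ∩ disjointed B n with hA_def
  have hAmeas : ∀ n, MeasurableSet (A n) :=
    fun n => (hK.measurableSet).inter (MeasurableSet.disjointed hBmeas n)
  have hAdisj : Pairwise (Function.onFun Disjoint A) := fun i j hij =>
    ((disjoint_disjointed B) hij).mono inter_subset_right inter_subset_right
  have hAsub : ∀ n (h : n < m), A n ⊆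
      Metric.ball ((e ⟨n, h⟩ : K) : Euc d) (t (e ⟨n, h⟩) : ℝ) := by
    intro n h y hy
    have h1 : y ∈ B n := disjointed_subset B n hy.2
    rw [hB_def] at h1
    obtain ⟨h2, h3⟩ := mem_iUnion.mp h1
    exact h3
  have hKeq : K = ⋃ n ∈ Finset.range m, A n := by
    apply Subset.antisymm
    · intro y hy
      have h1 : y ∈ ⋃ n, disjointed B n := by
        rw [iUnion_disjointed]
        exact hKcover hy
      obtain ⟨n, hn⟩ := mem_iUnion.mp h1
      have h2 : n < m := by
        by_contra h3
        have h4 := disjointed_subset B n hn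
        rw [hBempty n (not_lt.mp h3)] at h4
        exact absurd h4 (notMem_empty y)
      exact mem_biUnion (Finset.mem_range.mpr h2) ⟨hy, hn⟩
    · exact iUnion₂_subset (fun n _ => inter_subset_left)
  -- apply `piece` on each part
  have hP : ∀ n (h : n < m),
      (∀ x ∈ Metric.ball x₀ (t (e ⟨n, h⟩) : ℝ), IntegrableOn (fun y => g (x, y)) (A n) μ) ∧
      AnalyticAt ℝ (fun x => ∫ y in A n, g (x, y) ∂μ) x₀ := by
    intro n h
    refine piece μ (hAmeas n) (ht (e ⟨n, h⟩))
      (fun y hy => hQ _ y (hAsub n h hy)) (fun y hy k => hC _ y (hAsub n h hy) k)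
      (fun k => ((hQc (e ⟨n, h⟩) k).mono (hAsub n h)).aestronglyMeasurable (hAmeas n))
  by_cases hm0 : m = 0
  · -- K is empty
    have hKempty : K = ∅ := by
      rw [hKeq, hm0]
      simp
    have hfun : (fun x : Euc d => ∫ y in K, g (x, y) ∂μ) = fun _ => 0 := by
      funext x
      rw [hKempty]
      simp
    rw [hfun]
    exact analyticAt_const
  · haveI hne : Nonempty (Fin m) := ⟨⟨0, Nat.pos_of_ne_zero hm0⟩⟩
    set ρ : ℝ := Finset.univ.inf' (Finset.univ_nonempty) (fun i : Fin m => (t (e i) : ℝ))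
      with hρ_def
    have hρ0 : 0 < ρ := by
      rw [hρ_def, Finset.lt_inf'_iff]
      exact fun i _ => by exact_mod_cast ht (e i)
    have hIntAll : ∀ x ∈ Metric.ball x₀ ρ, ∀ n ∈ Finset.range m,
        IntegrableOn (fun y => g (x, y)) (A n) μ := by
      intro x hx n hn
      have h := Finset.mem_range.mp hn
      refine (hP n h).1 x ?_
      refine Metric.ball_subset_ball ?_ hx
      rw [hρ_def]
      exact Finset.inf'_le _ (Finset.mem_univ (⟨n, h⟩ : Fin m))
    have heq : ∀ x ∈ Metric.ball x₀ ρ,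
        (∫ y in K, g (x, y) ∂μ) = ∑ n ∈ Finset.range m, ∫ y in A n, g (x, y) ∂μ := by
      intro x hx
      rw [hKeq]
      exact integral_biUnion_finset (Finset.range m) (fun n _ => hAmeas n)
        ((hAdisj.set_pairwise _)) (hIntAll x hx)
    have hsum : AnalyticAt ℝ
        (fun x => ∑ n ∈ Finset.range m, ∫ y in A n, g (x, y) ∂μ) x₀ := by
      refine Finset.analyticAt_fun_sum _ (fun n hn => ?_)
      exact (hP n (Finset.mem_range.mp hn)).2
    refine hsum.congr ?_
    filter_upwards [Metric.ball_mem_nhds x₀ hρ0] with x hx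
    exact (heq x hx).symm

/-- For a separated similarity IFS on `ℝ^d` with attractor `C` and a real
analytic `Ω`, homogeneous of degree zero, the function
`f(x) = ∫_{C∖C_1} Ω(x−y)/|x−y|^s dμ(y)` is well defined and real analytic on `ℝ^d∖(C∖C_1)`. -/
theorem stmt12
    {d N : ℕ} (hd : 1 ≤ d) (hN : 2 ≤ N)
    (r : Fin N → ℝ) (hr : ∀ i, r i ∈ Set.Ioo (0:ℝ) 1)
    (S : Fin N → Euc d → Euc d)
    (hSsim : ∀ i x y, dist (S i x) (S i y) = r i * dist x y)
    (C : Set (Euc d)) (hCne : C.Nonempty) (hCcomp : IsCompact C)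
    (hCinv : C = ⋃ i, S i '' C)
    (hsep : ∀ i j, i ≠ j → Disjoint (S i '' C) (S j '' C))
    (s : ℝ) (hs : 0 < s) (hdim : ∑ i, r i ^ s = 1)
    (μ : Measure (Euc d)) (hμ : μ = (μH[s] C)⁻¹ • μH[s].restrict C)
    (Ω : Euc d → ℝ)
    (hΩan : AnalyticOnNhd ℝ Ω {x | x ≠ 0})
    (hΩhom : ∀ c : ℝ, 0 < c → ∀ x, x ≠ 0 → Ω (c • x) = Ω x) :
    (∀ x ∉ C \ S ⟨0, by omega⟩ '' C,
      IntegrableOn (fun y => Ω (x - y) / ‖x - y‖ ^ s) (C \ S ⟨0, by omega⟩ '' C) μ) ∧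
    AnalyticOnNhd ℝ (fun x => ∫ y in C \ S ⟨0, by omega⟩ '' C, Ω (x - y) / ‖x - y‖ ^ s ∂μ)
      (C \ S ⟨0, by omega⟩ '' C)ᶜ := by
  set i₀ : Fin N := ⟨0, by omega⟩ with hi₀
  set K : Set (Euc d) := C \ S i₀ '' C with hK_def
  -- continuity of the maps
  have hScont : ∀ i, Continuous (S i) := by
    intro i
    have hL : LipschitzWith (Real.toNNReal (r i)) (S i) := by
      apply LipschitzWith.of_dist_le_mul
      intro x y
      rw [hSsim i x y, Real.coe_toNNReal _ (hr i).1.le]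
  -- K is compact
    exact hL.continuous
  have hKeq : K = ⋃ i ∈ {i : Fin N | i ≠ i₀}, S i '' C := by
    apply Set.Subset.antisymm
    · rintro y ⟨hyC, hyn⟩
      rw [hCinv] at hyC
      obtain ⟨i, hi⟩ := mem_iUnion.mp hyC
      have hii : i ≠ i₀ := by
        rintro rfl
        exact hyn hi
      exact mem_iUnion₂.mpr ⟨i, hii, hi⟩
    · rintro y hy
      obtain ⟨i, hii, hyi⟩ := mem_iUnion₂.mp hy
      refine ⟨?_, ?_⟩
      · rw [hCinv]
        exact mem_iUnion.mpr ⟨i, hyi⟩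
      · intro hcon
        exact Set.disjoint_left.mp (hsep i i₀ hii) hyi hcon
  have hKcomp : IsCompact K := by
    rw [hKeq]
    exact Set.Finite.isCompact_biUnion (Set.toFinite _)
      (fun i _ => hCcomp.image (hScont i))
  -- μ is a finite measure
  haveI hμfin : IsFiniteMeasure μ := by
    constructor
    rw [hμ]
    have h1 : ((μH[s] C)⁻¹ • μH[s].restrict C) Set.univ = (μH[s] C)⁻¹ * μH[s] C := by
      rw [Measure.smul_apply, Measure.restrict_apply_univ, smul_eq_mul]
    rw [h1]
    have h2 : (μH[s] C)⁻¹ * μH[s] C ≤ 1 := by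
      rcases eq_or_ne (μH[s] C) 0 with h | h
      · simp [h]
      · rcases eq_or_ne (μH[s] C) ⊤ with h' | h'
        · simp [h']
        · rw [ENNReal.inv_mul_cancel h h']
    exact lt_of_le_of_lt h2 ENNReal.one_lt_top
  -- integrability
  have hInt : ∀ x ∉ K, IntegrableOn (fun y => Ω (x - y) / ‖x - y‖ ^ s) K μ := by
    intro x hx
    have hcont : ContinuousOn (fun y => Ω (x - y) / ‖x - y‖ ^ s) K := by
      intro y hy
      have hxy : x - y ≠ 0 := sub_ne_zero.mpr (fun h => hx (h ▸ hy))
      have h1 : ContinuousAt (fun y : Euc d => x - y) y :=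
        (continuous_const.sub continuous_id).continuousAt
      have h2 : ContinuousAt (fun y : Euc d => Ω (x - y)) y :=
        ContinuousAt.comp (x := y) (f := fun y : Euc d => x - y)
          ((hΩan _ hxy).continuousAt) h1
      have h4 : ContinuousAt (fun u : ℝ => u ^ s) ‖x - y‖ :=
        Real.continuousAt_rpow_const _ _ (Or.inl (norm_ne_zero_iff.mpr hxy))
      have h3 : ContinuousAt (fun y : Euc d => ‖x - y‖ ^ s) y :=
        ContinuousAt.comp (x := y) (f := fun y : Euc d => ‖x - y‖) h4
          ((continuous_const.sub continuous_id).norm.continuousAt)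
      have hden : ‖x - y‖ ^ s ≠ 0 :=
        (Real.rpow_pos_of_pos (norm_pos_iff.mpr hxy) s).ne'
      exact ((h2.div h3 hden)).continuousWithinAt
    exact hcont.integrableOn_compact hKcomp
  refine ⟨hInt, ?_⟩
  intro x₀ hx₀
  have := analyticAt_setIntegral μ hKcomp
    (g := fun p : Euc d × Euc d => Ω (p.1 - p.2) / ‖p.1 - p.2‖ ^ s) (x₀ := x₀)
    (fun y hy => g_analytic s hΩan (fun h => hx₀ (h ▸ hy)))
  exact this
end
end

section
/- Let S = {S_i}_{i∈E} be a separated, rotation-free similarity IFS on ℝ^d with attractor C of similarity dimension s and μ = H^s(C)^{-1}·H^s⌊C, and let k(x,y) = Ω(x−y)/|x−y|^s be an s-homogeneous kernel. Let w ∈ E^* be a nonempty finite word with fixed point x_w of S_w. Then for every integer m ≥ 0, ∫_{C_{w^m}∖C_{w^{m+1}}} k(x_w,y) dμ(y) = ∫_{C∖C_w} k(x_w,y) dμ(y) (both integrals being finite). -/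
open MeasureTheory Metric Set Filter
open scoped ENNReal Topology NNReal

noncomputable section

lemma Sw_append {d N : ℕ} (S : Fin N → Euc d → Euc d) (u v : List (Fin N)) :
    Sw S (u ++ v) = Sw S u ∘ Sw S v := by
  induction u with
  | nil => rfl
  | cons i t ih => simp [Sw, ih, Function.comp_assoc]

lemma wrep_succ {N : ℕ} (w : List (Fin N)) (m : ℕ) : wrep w (m+1) = wrep w m ++ w := by
  simp [wrep, List.replicate_succ']

lemma Sw_affine {d N : ℕ} (q : Fin N → Euc d) (r : Fin N → ℝ)
    (S : Fin N → Euc d → Euc d) (hS : ∀ i x, S i x = q i + r i • x) :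
    ∀ (l : List (Fin N)) (x), Sw S l x = Sw S l 0 + (l.map r).prod • x := by
  intro l
  induction l with
  | nil => intro x; simp [Sw]
  | cons i t ih =>
    intro x
    simp only [Sw, Function.comp_apply, List.map_cons, List.prod_cons]
    rw [ih x, ih 0, hS, hS]
    simp [smul_add, smul_smul, add_assoc]

/-- An affine homothety as a homeomorphism. -/
def affHomeo {d : ℕ} (a : Euc d) (ρ : ℝ) (hρ : ρ ≠ 0) : Euc d ≃ₜ Euc d where
  toFun x := a + ρ • x
  invFun y := ρ⁻¹ • (y - a)
  left_inv x := by simp [smul_smul, inv_mul_cancel₀ hρ]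
  right_inv y := by simp [smul_smul, mul_inv_cancel₀ hρ]
  continuous_toFun := continuous_const.add (continuous_id.const_smul ρ)
  continuous_invFun := (continuous_id.sub continuous_const).const_smul ρ⁻¹

open scoped Pointwise in
lemma hausdorff_image_aff {d : ℕ} (a : Euc d) {ρ : ℝ} (hρ : 0 < ρ) {s : ℝ} (hs : 0 < s)
    (B : Set (Euc d)) :
    μH[s] ((fun x => a + ρ • x) '' B) = (‖ρ‖₊ ^ s : ℝ≥0) • μH[s] B := by
  have h1 : (fun x : Euc d => a + ρ • x) '' B = (fun x => a + x) '' (ρ • B) := by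
    rw [← Set.image_smul, Set.image_image]
  have hiso : Isometry (fun x : Euc d => a + x) :=
    Isometry.of_dist_eq fun x y => by simp [dist_eq_norm, add_sub_add_left_eq_sub]
  rw [h1, hiso.hausdorffMeasure_image (Or.inl hs.le),
    MeasureTheory.Measure.hausdorffMeasure_smul₀ hs.le hρ.ne' B]

/-- For a separated, rotation-free similarity IFS on `ℝ^d`, an `s`-homogeneous
kernel `k`, and a nonempty word `w` with fixed point `x_w`, for every `m ≥ 0` the integral of
`k(x_w,·)` over `C_{w^m}∖C_{w^{m+1}}` equals the one over `C∖C_w`, both being finite. -/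
theorem stmt16
    {d N : ℕ} (hd : 1 ≤ d) (hN : 2 ≤ N)
    (q : Fin N → Euc d) (r : Fin N → ℝ) (hr : ∀ i, r i ∈ Set.Ioo (0:ℝ) 1)
    (S : Fin N → Euc d → Euc d) (hS : ∀ i x, S i x = q i + r i • x)
    (C : Set (Euc d)) (hCne : C.Nonempty) (hCcomp : IsCompact C)
    (hCinv : C = ⋃ i, S i '' C)
    (hsep : ∀ i j, i ≠ j → Disjoint (S i '' C) (S j '' C))
    (s : ℝ) (hs : 0 < s) (hdim : ∑ i, r i ^ s = 1)
    (μ : Measure (Euc d)) (hμ : μ = (μH[s] C)⁻¹ • μH[s].restrict C)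
    (Ω : Euc d → ℝ)
    (hΩc : ContinuousOn Ω {x | x ≠ 0})
    (hΩne : ∃ x, x ≠ 0 ∧ Ω x ≠ 0)
    (hΩhom : ∀ c : ℝ, 0 < c → ∀ x, x ≠ 0 → Ω (c • x) = Ω x)
    (w : List (Fin N)) (hwne : w ≠ []) (xw : Euc d) (hxw : Sw S w xw = xw) :
    ∀ m : ℕ,
      IntegrableOn (fun y => Ω (xw - y) / ‖xw - y‖ ^ s)
        (Sw S (wrep w m) '' C \ Sw S (wrep w (m + 1)) '' C) μ ∧
      IntegrableOn (fun y => Ω (xw - y) / ‖xw - y‖ ^ s) (C \ Sw S w '' C) μ ∧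
      (∫ y in Sw S (wrep w m) '' C \ Sw S (wrep w (m + 1)) '' C,
          Ω (xw - y) / ‖xw - y‖ ^ s ∂μ)
        = ∫ y in C \ Sw S w '' C, Ω (xw - y) / ‖xw - y‖ ^ s ∂μ := by
  intro m
  set g : Euc d → ℝ := fun y => Ω (xw - y) / ‖xw - y‖ ^ s with hgdef
  have hrpos : ∀ i, 0 < r i := fun i => (hr i).1
  have hρpos : ∀ l : List (Fin N), 0 < (l.map r).prod := by
    intro l
    apply List.prod_pos
    intro x hx
    obtain ⟨i, -, rfl⟩ := List.mem_map.1 hx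
    exact hrpos i
  have haff := Sw_affine q r S hS
  have hScont : ∀ i, Continuous (S i) := by
    intro i
    have h : S i = fun x => q i + r i • x := funext (hS i)
    rw [h]
    exact continuous_const.add (continuous_const_smul (r i))
  have hinj1 : ∀ i, Function.Injective (S i) := by
    intro i x y hxy
    rw [hS, hS] at hxy
    exact smul_right_injective (Euc d) (hrpos i).ne' (add_left_cancel hxy)
  have hsub1 : ∀ i, S i '' C ⊆ C := by
    intro i
    conv_rhs => rw [hCinv]
    exact Set.subset_iUnion (fun j => S j '' C) i
  have hsub : ∀ l, Sw S l '' C ⊆ C := by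
    intro l
    induction l with
    | nil => simp [Sw]
    | cons i t ih =>
      have h1 : Sw S (i :: t) '' C = S i '' (Sw S t '' C) := Set.image_comp _ _ _
      rw [h1]
      exact (Set.image_mono ih).trans (hsub1 i)
  have hE : ∀ l : List (Fin N), ∃ e : Euc d ≃ₜ Euc d, ⇑e = Sw S l := by
    intro l
    refine ⟨affHomeo (Sw S l 0) _ (hρpos l).ne', ?_⟩
    funext x
    exact (haff l x).symm
  have hinj : ∀ l, Function.Injective (Sw S l) := by
    intro l
    obtain ⟨e, he⟩ := hE l
    rw [← he]; exact e.injective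
  have himgopen : ∀ (l) (U : Set (Euc d)), IsOpen U → IsOpen (Sw S l '' U) := by
    intro l U hU
    obtain ⟨e, he⟩ := hE l
    rw [← he]
    exact e.isOpen_image.2 hU
  have hopen1 : ∀ i : Fin N, ∃ V, IsOpen V ∧ S i '' C = C ∩ V := by
    intro i
    have hKclosed : IsClosed (⋃ j : {j : Fin N // j ≠ i}, S j.1 '' C) :=
      isClosed_iUnion_of_finite fun j => (hCcomp.image (hScont j.1)).isClosed
    refine ⟨(⋃ j : {j : Fin N // j ≠ i}, S j.1 '' C)ᶜ, hKclosed.isOpen_compl, ?_⟩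
    apply Set.Subset.antisymm
    · intro x hx
      refine ⟨hsub1 i hx, ?_⟩
      intro hxK
      obtain ⟨j, hxj⟩ := Set.mem_iUnion.1 hxK
      exact Set.disjoint_left.1 (hsep j.1 i j.2) hxj hx
    · rintro x ⟨hxC, hxK⟩
      rw [hCinv] at hxC
      obtain ⟨j, hxj⟩ := Set.mem_iUnion.1 hxC
      by_cases hji : j = i
      · rwa [hji] at hxj
      · exact absurd (Set.mem_iUnion.2 ⟨⟨j, hji⟩, hxj⟩) hxK
  have hopen : ∀ l, ∃ U, IsOpen U ∧ Sw S l '' C = C ∩ U := by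
    intro l
    induction l with
    | nil => exact ⟨Set.univ, isOpen_univ, by simp [Sw]⟩
    | cons i t ih =>
      obtain ⟨U, hU, hEq⟩ := ih
      obtain ⟨V, hV, hVeq⟩ := hopen1 i
      have h1 : Sw S (i :: t) '' C = S i '' (Sw S t '' C) := Set.image_comp _ _ _
      have hSiU : IsOpen (S i '' U) := by
        have h2 : S i '' U = Sw S [i] '' U := rfl
        rw [h2]; exact himgopen [i] U hU
      refine ⟨V ∩ S i '' U, hV.inter hSiU, ?_⟩
      rw [h1, hEq, Set.image_inter (hinj1 i), hVeq, Set.inter_assoc]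
  -- the reference set A
  set A : Set (Euc d) := C \ Sw S w '' C with hAdef
  have hAclosed : IsClosed A := by
    obtain ⟨U, hU, hEq⟩ := hopen w
    have h1 : A = C ∩ Uᶜ := by
      rw [hAdef, hEq]
      ext x
      simp only [Set.mem_diff, Set.mem_inter_iff, Set.mem_compl_iff]
      tauto
    rw [h1]
    exact hCcomp.isClosed.inter hU.isClosed_compl
  have hAcomp : IsCompact A := hCcomp.of_isClosed_subset hAclosed Set.diff_subset
  -- fixed point facts
  have hfix : ∀ k, Sw S (wrep w k) xw = xw := by
    intro k
    induction k with
    | zero => simp [wrep, Sw]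
    | succ k ih =>
      rw [wrep_succ, Sw_append, Function.comp_apply, hxw, ih]
  have hxwnotA : ∀ y ∈ A, y ≠ xw := by
    intro y hy h
    subst h
    exact hy.2 ⟨y, hy.1, hxw⟩
  -- continuity of the kernel away from xw
  have hgc : ∀ B : Set (Euc d), (∀ y ∈ B, y ≠ xw) → ContinuousOn g B := by
    intro B hB
    have hne : ∀ y ∈ B, xw - y ≠ 0 := fun y hy =>
      sub_ne_zero.mpr fun h => hB y hy h.symm
    apply ContinuousOn.div
    · exact hΩc.comp (continuous_const.sub continuous_id).continuousOn hne
    · exact (((continuous_const.sub continuous_id).norm).rpow_const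
        (fun y => Or.inr hs.le)).continuousOn
    · intro y hy
      exact (Real.rpow_pos_of_pos (norm_pos_iff.mpr (hne y hy)) s).ne'
  -- μ is a finite measure
  have hμfin : IsFiniteMeasure μ := by
    constructor
    rw [hμ, Measure.smul_apply, Measure.restrict_apply_univ, smul_eq_mul]
    exact lt_of_le_of_lt (ENNReal.inv_mul_le_one _) ENNReal.one_lt_top
  haveI := hμfin
  haveI : IsFiniteMeasureOnCompacts μ := ⟨fun K _ => measure_lt_top μ K⟩
  have hintA : IntegrableOn g A μ :=
    (hgc A hxwnotA).integrableOn_compact hAcomp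
  -- the scaling map
  obtain ⟨e, he⟩ := hE (wrep w m)
  set ρ : ℝ := ((wrep w m).map r).prod with hρdef
  have hρ : 0 < ρ := hρpos _
  have hρs : (0:ℝ) < ρ ^ s := Real.rpow_pos_of_pos hρ s
  set c₀ : ℝ≥0∞ := ((‖ρ‖₊ ^ s : ℝ≥0) : ℝ≥0∞) with hc₀def
  have hc₀0 : c₀ ≠ 0 := by
    simp [hc₀def, NNReal.rpow_eq_zero_iff, nnnorm_eq_zero, hρ.ne']
  have hc₀top : c₀ ≠ ∞ := ENNReal.coe_ne_top
  have hc₀real : c₀.toReal = ρ ^ s := by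
    rw [hc₀def, ENNReal.coe_toReal, NNReal.coe_rpow, coe_nnnorm, Real.norm_eq_abs,
      abs_of_pos hρ]
  -- Hausdorff measure scaling
  have hH : ∀ B : Set (Euc d), μH[s] (Sw S (wrep w m) '' B) = c₀ * μH[s] B := by
    intro B
    have h1 : Sw S (wrep w m) '' B = (fun x => Sw S (wrep w m) 0 + ρ • x) '' B := by
      apply Set.image_congr'
      intro x
      exact haff _ x
    rw [h1, hausdorff_image_aff _ hρ hs B, hc₀def, ENNReal.smul_def, smul_eq_mul]
  have hμapply : ∀ X : Set (Euc d), MeasurableSet X → μ X = (μH[s] C)⁻¹ * μH[s] (X ∩ C) := by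
    intro X hX
    rw [hμ, Measure.smul_apply, Measure.restrict_apply hX, smul_eq_mul]
  -- transfer of the measure under e
  have hmap : μ.restrict (⇑e '' A) = c₀ • Measure.map (⇑e) (μ.restrict A) := by
    ext Z hZ
    rw [Measure.restrict_apply hZ, Measure.smul_apply,
      Measure.map_apply e.measurable hZ,
      Measure.restrict_apply (e.measurable hZ), smul_eq_mul]
    set Y : Set (Euc d) := ⇑e ⁻¹' Z ∩ A with hYdef
    have hYmeas : MeasurableSet Y := (e.measurable hZ).inter hAclosed.measurableSet
    have hYsub : Y ⊆ C := fun y hy => hy.2.1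
    have hZi : Z ∩ ⇑e '' A = ⇑e '' Y := by
      rw [hYdef, Set.image_inter e.injective, Set.image_preimage_eq Z e.surjective]
    have himgsub : ⇑e '' Y ⊆ C := by
      rw [he]
      exact (Set.image_mono hYsub).trans (hsub _)
    have himgmeas : MeasurableSet (⇑e '' Y) :=
      e.measurableEmbedding.measurableSet_image.mpr hYmeas
    rw [hZi, hμapply _ himgmeas, hμapply _ hYmeas,
      Set.inter_eq_left.mpr himgsub, Set.inter_eq_left.mpr hYsub, he, hH]
    ring
  -- kernel scaling identity
  have hvec : ∀ y, xw - Sw S (wrep w m) y = ρ • (xw - y) := by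
    intro y
    conv_lhs => rw [← hfix m]
    rw [haff _ xw, haff _ y, add_sub_add_left_eq_sub, ← smul_sub]
  have hker : ∀ y, g (Sw S (wrep w m) y) = (ρ ^ s)⁻¹ * g y := by
    intro y
    by_cases hy : y = xw
    · subst hy
      rw [hfix m]
      have h0 : g y = 0 := by
        simp only [hgdef, sub_self, norm_zero, Real.zero_rpow hs.ne', div_zero]
      rw [h0, mul_zero]
    · have hne : xw - y ≠ 0 := sub_ne_zero.mpr (Ne.symm hy)
      simp only [hgdef]
      rw [hvec y, hΩhom ρ hρ _ hne, norm_smul, Real.norm_eq_abs, abs_of_pos hρ,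
        Real.mul_rpow hρ.le (norm_nonneg _), div_mul_eq_div_div_swap, div_eq_inv_mul]
  have hkere : ∀ y, g (⇑e y) = (ρ ^ s)⁻¹ * g y := by
    intro y; rw [he]; exact hker y
  -- integrability on the image
  have hintT : IntegrableOn g (⇑e '' A) μ := by
    rw [IntegrableOn, hmap, integrable_smul_measure hc₀0 hc₀top,
      e.measurableEmbedding.integrable_map_iff]
    have h1 : (g ∘ ⇑e) = fun y => (ρ ^ s)⁻¹ * g y := funext hkere
    rw [h1]
    exact hintA.const_mul _
  -- the integral identity
  have hTint : ∫ y in ⇑e '' A, g y ∂μ = ∫ y in A, g y ∂μ := by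
    calc ∫ y in ⇑e '' A, g y ∂μ
        = ∫ y, g y ∂(c₀ • Measure.map (⇑e) (μ.restrict A)) := by rw [← hmap]
      _ = c₀.toReal • ∫ y, g y ∂(Measure.map (⇑e) (μ.restrict A)) := by
          rw [integral_smul_measure]
      _ = c₀.toReal • ∫ y, g (⇑e y) ∂(μ.restrict A) := by
          rw [e.measurableEmbedding.integral_map]
      _ = (ρ ^ s) * ∫ y in A, (ρ ^ s)⁻¹ * g y ∂μ := by
          rw [hc₀real, smul_eq_mul]
          congr 1
          exact integral_congr_ae (Filter.Eventually.of_forall fun y => hkere y)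
      _ = ∫ y in A, g y ∂μ := by
          rw [integral_const_mul, ← mul_assoc, mul_inv_cancel₀ hρs.ne', one_mul]
  -- final set identity
  have hset : Sw S (wrep w m) '' C \ Sw S (wrep w (m + 1)) '' C = ⇑e '' A := by
    rw [wrep_succ, Sw_append, Set.image_comp, ← he, ← Set.image_diff e.injective]
  rw [hset]
  exact ⟨hintT, hintA, hTint⟩
end
end
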